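/- arXiv:2206.01067 — 2 statements merged into one kernel-verified Lean document; each statement's English description precedes it below -/
import Mathlib

section
/- Fix η ∈ (0, 1/2), reals V and v with |v| ≤ 1, and f ≥ 1. Let L = exp(ηV/f) + exp(−ηV/f) and C = (exp(ηV/f) − exp(−ηV/f))/f. Then exp(η(V+v)/f) + exp(−η(V+v)/f) − L ≤ η·v·C + (2η²/f²)·L. -/
/-! With `a = ηV/f` and `x = ηv/f`, factor `exp (±(a + x)) = exp (±a) · exp (±x)` and bound
`exp (±x) ≤ 1 ± x + x²`, valid since `|x| ≤ η/f ≤ 1`. The linear terms give `η v C`, and the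
quadratic ones give `x² L ≤ (η²/f²) L`, which is within the claimed `(2η²/f²) L`. -/

open Real

lemma Real.exp_le_one_add_add_sq {x : ℝ} (hx : |x| ≤ 1) : exp x ≤ 1 + x + x ^ 2 := by
  linarith [(abs_le.mp (abs_exp_sub_one_sub_id_le hx)).2]

lemma Real.exp_add_add_exp_neg_add_le (a : ℝ) {x : ℝ} (hx : |x| ≤ 1) :
    exp (a + x) + exp (-(a + x)) ≤
      exp a + exp (-a) + x * (exp a - exp (-a)) + x ^ 2 * (exp a + exp (-a)) := by
  have h_pos : exp a * exp x ≤ exp a * (1 + x + x ^ 2) :=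
    mul_le_mul_of_nonneg_left (exp_le_one_add_add_sq hx) (exp_pos a).le
  have h_neg : exp (-a) * exp (-x) ≤ exp (-a) * (1 + -x + (-x) ^ 2) :=
    mul_le_mul_of_nonneg_left (exp_le_one_add_add_sq (by rwa [abs_neg])) (exp_pos (-a)).le
  rw [neg_add, exp_add, exp_add]
  linarith

theorem surrogate_loss_single_step (η V v f : ℝ)
    (hη0 : 0 < η) (hη : η < 1/2) (hv : |v| ≤ 1) (hf : 1 ≤ f)
    (L C : ℝ)
    (hL : L = Real.exp (η * V / f) + Real.exp (-(η * V / f)))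
    (hC : C = (Real.exp (η * V / f) - Real.exp (-(η * V / f))) / f) :
    Real.exp (η * (V + v) / f) + Real.exp (-(η * (V + v) / f)) - L
      ≤ η * v * C + (2 * η ^ 2 / f ^ 2) * L := by
  have hf0 : 0 < f := one_pos.trans_le hf
  have hv_sq : v ^ 2 ≤ 1 := by rw [← sq_abs]; nlinarith [abs_nonneg v]
  have hx : |η * v / f| ≤ 1 := by
    rw [abs_div, abs_mul, abs_of_pos hη0, abs_of_pos hf0, div_le_one hf0]
    nlinarith [abs_nonneg v]
  have hx_sq : (η * v / f) ^ 2 ≤ 2 * η ^ 2 / f ^ 2 := by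
    rw [div_pow, mul_pow]
    gcongr ?_ / _
    nlinarith [sq_nonneg η]
  have hL_nonneg : 0 ≤ L := by rw [hL]; positivity
  have h_split : η * (V + v) / f = η * V / f + η * v / f := by ring
  have h_lin : η * v * C = η * v / f * (exp (η * V / f) - exp (-(η * V / f))) := by
    rw [hC]; ring
  rw [h_split, h_lin]
  have h_quad := mul_le_mul_of_nonneg_right hx_sq hL_nonneg
  have h_exp := exp_add_add_exp_neg_add_le (η * V / f) hx
  rw [← hL] at h_exp
  linarith
end

section
/- Fix η ∈ (0, 1/2), a real V, v ∈ [−1,1], and reals f₁, f₂ with 1 ≤ f₁ ≤ f₂. Then (exp(η(V+v)/f₂) + exp(−η(V+v)/f₂)) − (exp(ηV/f₁) + exp(−ηV/f₁)) ≤ η·v·(exp(ηV/f₁) − exp(−ηV/f₁))/f₁ + (2η²/f₁²)·(exp(ηV/f₁) + exp(−ηV/f₁)). -/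
/-!
Since `cosh` is increasing in `|x|` and `|η (V + v) / f₂| ≤ |η (V + v) / f₁|`, it suffices
to treat `f₂ = f₁`. Writing `a = η V / f₁` and `b = η v / f₁`, we have `|b| ≤ η / f₁ ≤ 1/2`,
and the second-order bound `exp b ≤ 1 + b + b²` for `|b| ≤ 1`, applied to
`exp (±(a + b)) = exp (±a) exp (±b)`, gives `cosh (a + b) ≤ cosh a + b sinh a + b² cosh a`.
-/

open Real

lemma Real.cosh_add_le {a b : ℝ} (hb : |b| ≤ 1) :
    cosh (a + b) ≤ cosh a + b * sinh a + b ^ 2 * cosh a := by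
  have hpos : exp (a + b) ≤ exp a * (1 + b + b ^ 2) := by
    rw [exp_add]
    exact mul_le_mul_of_nonneg_left (exp_le_one_add_add_sq hb) (exp_pos a).le
  have hneg : exp (-(a + b)) ≤ exp (-a) * (1 + -b + (-b) ^ 2) := by
    rw [neg_add, exp_add]
    exact mul_le_mul_of_nonneg_left (exp_le_one_add_add_sq (by rwa [abs_neg])) (exp_pos _).le
  rw [cosh_eq, cosh_eq, sinh_eq]
  linear_combination (hpos + hneg) / 2

theorem surrogate_loss_increase (η V v f₁ f₂ : ℝ)
    (hη0 : 0 < η) (hη : η < 1/2) (hv : v ∈ Set.Icc (-1 : ℝ) 1)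
    (hf₁ : 1 ≤ f₁) (hf₁₂ : f₁ ≤ f₂) :
    (Real.exp (η * (V + v) / f₂) + Real.exp (-(η * (V + v) / f₂)))
      - (Real.exp (η * V / f₁) + Real.exp (-(η * V / f₁)))
    ≤ η * v * (Real.exp (η * V / f₁) - Real.exp (-(η * V / f₁))) / f₁
      + (2 * η ^ 2 / f₁ ^ 2) *
        (Real.exp (η * V / f₁) + Real.exp (-(η * V / f₁))) := by
  have hf₁0 : 0 < f₁ := by linarith
  have hb : |η * v / f₁| ≤ η / f₁ := by
    rw [abs_div, abs_mul, abs_of_pos hη0, abs_of_pos hf₁0]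
    gcongr
    exact mul_le_of_le_one_right hη0.le (abs_le.2 hv)
  have hηf : η / f₁ ≤ 1 := (div_le_one hf₁0).2 (by linarith)
  have hsq : (η * v / f₁) ^ 2 ≤ (η / f₁) ^ 2 := sq_le_sq' (abs_le.1 hb).1 (abs_le.1 hb).2
  have habs : |η * (V + v) / f₂| ≤ |η * V / f₁ + η * v / f₁| := by
    rw [← add_div, ← mul_add, abs_div, abs_div, abs_of_pos hf₁0,
      abs_of_pos (hf₁0.trans_le hf₁₂)]
    gcongr
  have hcosh := (cosh_le_cosh.2 habs).trans (cosh_add_le (hb.trans hηf))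
  have hE : 0 ≤ exp (η * V / f₁) + exp (-(η * V / f₁)) := by positivity
  rw [cosh_eq, cosh_eq, sinh_eq] at hcosh
  linear_combination
    2 * hcosh + mul_le_mul_of_nonneg_right hsq hE + mul_nonneg (sq_nonneg (η / f₁)) hE
end
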